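/- Second branch of the two-region loss bound: for positive τ₁₂, τ₂₁ and θ = M/(b₁₁τ₁₁) ∈ [0, τ₁₂/(τ₁₂+τ₂₁)], the loss 1 − 1/(1 + θ·τ₂₁/(τ₁₂+τ₂₁)) is at most 1 − 1/(1 + τ₁₂τ₂₁/(τ₁₂+τ₂₁)²) ≤ 1/5. -/
import Mathlib


/-- Second branch of the two-region loss bound: for positive `τ₁₂`, `τ₂₁` and
`θ ∈ [0, τ₁₂/(τ₁₂+τ₂₁)]`, the loss `1 − 1/(1 + θ τ₂₁/(τ₁₂+τ₂₁))` is at most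
`1 − 1/(1 + τ₁₂τ₂₁/(τ₁₂+τ₂₁)²) ≤ 1/5`. -/
theorem av_first_loss_second_branch (τ12 τ21 θ : ℝ) (h12 : 0 < τ12)
    (h21 : 0 < τ21) (hθ : θ ∈ Set.Icc (0 : ℝ) (τ12 / (τ12 + τ21))) :
    1 - 1 / (1 + θ * τ21 / (τ12 + τ21)) ≤
      1 - 1 / (1 + τ12 * τ21 / (τ12 + τ21) ^ 2) ∧
    1 - 1 / (1 + τ12 * τ21 / (τ12 + τ21) ^ 2) ≤ 1 / 5 := by
  obtain ⟨hθ0, hθ1⟩ := hθ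
  have hs : 0 < τ12 + τ21 := by linarith
  have ha : 0 ≤ θ * τ21 / (τ12 + τ21) := by positivity
  have hab : θ * τ21 / (τ12 + τ21) ≤ τ12 * τ21 / (τ12 + τ21) ^ 2 := by
    rw [div_le_div_iff₀ hs (by positivity)]
    have h : θ * (τ12 + τ21) ≤ τ12 := (le_div_iff₀ hs).mp hθ1
    nlinarith [mul_le_mul_of_nonneg_right h (by positivity : (0:ℝ) ≤ τ21 * (τ12 + τ21))]
  constructor
  · have : 1 / (1 + τ12 * τ21 / (τ12 + τ21) ^ 2) ≤
        1 / (1 + θ * τ21 / (τ12 + τ21)) := by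
      apply one_div_le_one_div_of_le (by linarith) (by linarith)
    linarith
  · have hb : τ12 * τ21 / (τ12 + τ21) ^ 2 ≤ 1 / 4 := by
      rw [div_le_div_iff₀ (by positivity) (by norm_num)]
      nlinarith [sq_nonneg (τ12 - τ21)]
    have : (4:ℝ) / 5 ≤ 1 / (1 + τ12 * τ21 / (τ12 + τ21) ^ 2) := by
      rw [div_le_div_iff₀ (by norm_num) (by positivity)]
      linarith
    linarith
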